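/- arXiv:2209.15218 — 2 statements merged into one kernel-verified Lean document; each statement's English description precedes it below -/
import Mathlib

section
/- Let (δ^t), (r^t), (s^t) be sequences of nonnegative reals with s⁰ = 0, and let a, b, c, d be nonnegative constants with b ≥ 1 and c > 0. Suppose δ^{t+1} + a s^{t+1} ≤ b δ^t + a s^t − c r^t + d for all t ≥ 0. Then for any T ≥ 1, min_{0 ≤ t ≤ T−1} r^t ≤ (b^T / (cT)) δ⁰ + d/c. -/
/-!
The weighted Lyapunov function `V t = δ t + a s t` satisfies `V (t+1) ≤ b V t - (c r t - d)`,
because `b ≥ 1` lets `a s t` absorb the factor `b`. Unrolling this recursion gives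
`∑_{t<T} b^(T-1-t) (c r t - d) ≤ b^T V 0 - V T ≤ b^T δ 0`; since every weight `b^(T-1-t)` is at
least `1`, some term satisfies `(c r t - d) T ≤ b^T δ 0`.
-/

open Finset

lemma sum_range_succ_pow_sub_mul (b : ℝ) (u : ℕ → ℝ) (n : ℕ) :
    ∑ t ∈ range (n + 1), b ^ (n - t) * u t = b * ∑ t ∈ range n, b ^ (n - 1 - t) * u t + u n := by
  rw [sum_range_succ, mul_sum, Nat.sub_self, pow_zero, one_mul]
  congr 1
  refine sum_congr rfl fun t ht => ?_
  rw [← mul_assoc, ← pow_succ']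
  congr 2
  have := mem_range.mp ht
  omega

lemma add_sum_pow_mul_le_pow_mul {V u : ℕ → ℝ} {b : ℝ} (hb : 0 ≤ b)
    (hV : ∀ t, V (t + 1) ≤ b * V t - u t) (n : ℕ) :
    V n + ∑ t ∈ range n, b ^ (n - 1 - t) * u t ≤ b ^ n * V 0 := by
  induction n with
  | zero => simp
  | succ n ih =>
    rw [Nat.add_sub_cancel, sum_range_succ_pow_sub_mul, pow_succ']
    nlinarith [hV n, mul_le_mul_of_nonneg_left ih hb]

lemma exists_mul_le_of_sum_pow_mul_le {u : ℕ → ℝ} {b B : ℝ} {T : ℕ} (hb : 1 ≤ b) (hT : 1 ≤ T)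
    (hB : 0 ≤ B) (hsum : ∑ t ∈ range T, b ^ (T - 1 - t) * u t ≤ B) :
    ∃ t < T, u t * T ≤ B := by
  by_contra! hlarge
  have hT' : (0 : ℝ) < T := by exact_mod_cast hT
  have hu : ∀ t ∈ range T, B / T < u t := fun t ht =>
    (div_lt_iff₀ hT').mpr (hlarge t (mem_range.mp ht))
  have hweight : ∀ t ∈ range T, u t ≤ b ^ (T - 1 - t) * u t := fun t ht =>
    le_mul_of_one_le_left ((div_nonneg hB hT'.le).trans (hu t ht).le) (one_le_pow₀ hb)
  have : B < ∑ t ∈ range T, u t := by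
    calc B = ∑ _t ∈ range T, B / T := by
            rw [sum_const, card_range, nsmul_eq_mul, mul_div_cancel₀ _ hT'.ne']
      _ < ∑ t ∈ range T, u t := sum_lt_sum_of_nonempty (nonempty_range_iff.mpr (by omega)) hu
  linarith [sum_le_sum hweight]

theorem descent_recursion_general (δ r s : ℕ → ℝ) (a b c d : ℝ)
    (hδ : ∀ t, 0 ≤ δ t) (hs : ∀ t, 0 ≤ s t)
    (hs0 : s 0 = 0)
    (ha : 0 ≤ a) (hb : 1 ≤ b) (hc : 0 < c)
    (hrec : ∀ t, δ (t + 1) + a * s (t + 1) ≤ b * δ t + a * s t - c * r t + d)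
    (T : ℕ) (hT : 1 ≤ T) :
    ∃ t < T, r t ≤ b ^ T / (c * T) * δ 0 + d / c := by
  have hb0 : 0 ≤ b := zero_le_one.trans hb
  have hV : ∀ t, δ (t + 1) + a * s (t + 1) ≤ b * (δ t + a * s t) - (c * r t - d) := fun t => by
    nlinarith [hrec t, le_mul_of_one_le_left (mul_nonneg ha (hs t)) hb]
  have hunroll := add_sum_pow_mul_le_pow_mul (V := fun t => δ t + a * s t) hb0 hV T
  have hVT : 0 ≤ δ T + a * s T := add_nonneg (hδ T) (mul_nonneg ha (hs T))
  have hsum : ∑ t ∈ range T, b ^ (T - 1 - t) * (c * r t - d) ≤ b ^ T * δ 0 := by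
    simp only [hs0, mul_zero, add_zero] at hunroll
    linarith
  obtain ⟨t, htT, ht⟩ :=
    exists_mul_le_of_sum_pow_mul_le hb hT (mul_nonneg (pow_nonneg hb0 T) (hδ 0)) hsum
  refine ⟨t, htT, ?_⟩
  have hT' : (0 : ℝ) < T := by exact_mod_cast hT
  rw [div_mul_eq_mul_div, div_add_div _ _ (by positivity) hc.ne', le_div_iff₀ (by positivity)]
  nlinarith [ht]

theorem descent_recursion (δ r s : ℕ → ℝ) (a b c d : ℝ)
    (hδ : ∀ t, 0 ≤ δ t) (hr : ∀ t, 0 ≤ r t) (hs : ∀ t, 0 ≤ s t)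
    (hs0 : s 0 = 0)
    (ha : 0 ≤ a) (hb : 1 ≤ b) (hc : 0 < c) (hd : 0 ≤ d)
    (hrec : ∀ t, δ (t + 1) + a * s (t + 1) ≤ b * δ t + a * s t - c * r t + d)
    (T : ℕ) (hT : 1 ≤ T) :
    ∃ t < T, r t ≤ b ^ T / (c * T) * δ 0 + d / c :=
  descent_recursion_general δ r s a b c d hδ hs hs0 ha hb hc hrec T hT
end

section
/- Let f₁,…,fₙ : ℝ^d → ℝ be differentiable with f = (1/n)∑ f_i, and suppose the strong growth condition (1/n)∑_i ‖∇f_i(x)‖² ≤ D‖∇f(x)‖² holds for all x. Let C₁,…,Cₙ be independent unbiased compressors in U(ω) and define g(x) = (1/n)∑_i C_i(∇f_i(x)). Then E[‖g(x)‖²] ≤ (Dω/n + 1)‖∇f(x)‖² for all x ∈ ℝ^d. -/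
open MeasureTheory ProbabilityTheory
open scoped RealInnerProductSpace


lemma indep_integral_inner {Ω : Type*} [MeasurableSpace Ω] {μ : Measure Ω} {d : ℕ}
    {X Y : Ω → EuclideanSpace ℝ (Fin d)}
    (h : IndepFun X Y μ) (hX : Integrable X μ) (hY : Integrable Y μ) :
    Integrable (fun ω => ⟪X ω, Y ω⟫) μ ∧
    ∫ ω, ⟪X ω, Y ω⟫ ∂μ = ⟪∫ ω, X ω ∂μ, ∫ ω, Y ω ∂μ⟫ := by
  have hpt : ∀ (u v : EuclideanSpace ℝ (Fin d)), ⟪u, v⟫ = ∑ k, u k * v k := by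
    intro u v
    simp [PiLp.inner_apply, RCLike.inner_apply, mul_comm]
  have hXk : ∀ k, Integrable (fun ω => X ω k) μ := fun k =>
    (EuclideanSpace.proj (𝕜 := ℝ) k).integrable_comp hX
  have hYk : ∀ k, Integrable (fun ω => Y ω k) μ := fun k =>
    (EuclideanSpace.proj (𝕜 := ℝ) k).integrable_comp hY
  have hIk : ∀ k : Fin d, IndepFun (fun ω => X ω k) (fun ω => Y ω k) μ := fun k =>
    h.comp (EuclideanSpace.proj (𝕜 := ℝ) k).measurable (EuclideanSpace.proj (𝕜 := ℝ) k).measurable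
  have hmul : ∀ k : Fin d, Integrable (fun ω => X ω k * Y ω k) μ := fun k =>
    (hIk k).integrable_mul (hXk k) (hYk k)
  have hint : Integrable (fun ω => ⟪X ω, Y ω⟫) μ := by
    have := integrable_finset_sum (μ := μ) Finset.univ (fun k _ => hmul k)
    exact this.congr (Filter.Eventually.of_forall fun ω => (hpt _ _).symm)
  refine ⟨hint, ?_⟩
  calc ∫ ω, ⟪X ω, Y ω⟫ ∂μ = ∫ ω, ∑ k, X ω k * Y ω k ∂μ := by simp_rw [hpt]
    _ = ∑ k, ∫ ω, X ω k * Y ω k ∂μ := integral_finset_sum _ fun k _ => hmul k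
    _ = ∑ k, (∫ ω, X ω k ∂μ) * (∫ ω, Y ω k ∂μ) := by
        refine Finset.sum_congr rfl fun k _ => ?_
        exact (hIk k).integral_fun_mul_eq_mul_integral (hXk k).aestronglyMeasurable (hYk k).aestronglyMeasurable
    _ = ⟪∫ ω, X ω ∂μ, ∫ ω, Y ω ∂μ⟫ := by
        rw [hpt]
        refine Finset.sum_congr rfl fun k _ => ?_
        have h1 := (EuclideanSpace.proj (𝕜 := ℝ) k).integral_comp_comm hX
        have h2 := (EuclideanSpace.proj (𝕜 := ℝ) k).integral_comp_comm hY
        simp only [show ∀ (v : EuclideanSpace ℝ (Fin d)), EuclideanSpace.proj (𝕜:=ℝ) k v = v k from fun v => rfl] at h1 h2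
        rw [← h1, ← h2]

lemma gradient_avg {d n : ℕ} (f : Fin n → EuclideanSpace ℝ (Fin d) → ℝ)
    (hdiff : ∀ i, Differentiable ℝ (f i)) (x : EuclideanSpace ℝ (Fin d)) :
    gradient (fun z => (n:ℝ)⁻¹ * ∑ i, f i z) x = (n:ℝ)⁻¹ • ∑ i, gradient (f i) x := by
  have hsum : DifferentiableAt ℝ (fun z => ∑ i, f i z) x :=
    DifferentiableAt.fun_sum fun i _ => (hdiff i).differentiableAt
  simp only [gradient]
  rw [fderiv_const_mul hsum, fderiv_fun_sum (fun i _ => (hdiff i).differentiableAt),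
    _root_.map_smul, map_sum]


theorem dcgd_strong_growth (d n : ℕ) (hn : 0 < n)
    {Ω : Type*} [MeasurableSpace Ω] (μ : Measure Ω) [IsProbabilityMeasure μ]
    (f : Fin n → EuclideanSpace ℝ (Fin d) → ℝ)
    (hdiff : ∀ i, Differentiable ℝ (f i))
    (D : ℝ) (hD : 0 < D)
    (hgrowth : ∀ x, (n : ℝ)⁻¹ * ∑ i, ‖gradient (f i) x‖ ^ 2 ≤
      D * ‖gradient (fun z => (n : ℝ)⁻¹ * ∑ i, f i z) x‖ ^ 2)
    (C : Fin n → Ω → EuclideanSpace ℝ (Fin d) → EuclideanSpace ℝ (Fin d))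
    (ω₀ : ℝ) (hω : 0 ≤ ω₀)
    (hunb : ∀ i u, ∫ ω, C i ω u ∂μ = u)
    (hvar : ∀ i u, ∫ ω, ‖C i ω u - u‖ ^ 2 ∂μ ≤ ω₀ * ‖u‖ ^ 2)
    (hindep : ∀ x, iIndepFun
      (fun i ω => C i ω (gradient (f i) x)) μ)
    (hint : ∀ i x, Integrable (fun ω => C i ω (gradient (f i) x)) μ)
    (hint2 : ∀ i x, Integrable (fun ω => ‖C i ω (gradient (f i) x)‖ ^ 2) μ) :
    ∀ x, ∫ ω, ‖(n : ℝ)⁻¹ • ∑ i, C i ω (gradient (f i) x)‖ ^ 2 ∂μ ≤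
      (D * ω₀ / n + 1) * ‖gradient (fun z => (n : ℝ)⁻¹ * ∑ i, f i z) x‖ ^ 2 := by
  intro x
  set a : Fin n → EuclideanSpace ℝ (Fin d) := fun i => gradient (f i) x with ha
  set X : Fin n → Ω → EuclideanSpace ℝ (Fin d) := fun i ω => C i ω (a i) - a i with hX
  set S : Ω → EuclideanSpace ℝ (Fin d) := fun ω => ∑ i, X i ω with hS
  set m : EuclideanSpace ℝ (Fin d) := ∑ i, a i with hm
  set c : ℝ := (n : ℝ)⁻¹ with hc
  have hc0 : 0 ≤ c := by positivity
  set Fg : EuclideanSpace ℝ (Fin d) := gradient (fun z => (n : ℝ)⁻¹ * ∑ i, f i z) x with hFg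
  have hFgm : Fg = c • m := gradient_avg f hdiff x
  -- integrability
  have hXint : ∀ i, Integrable (X i) μ := fun i => (hint i x).sub (integrable_const (a i))
  have hSint : Integrable S μ := integrable_finset_sum _ fun i _ => hXint i
  have hX2 : ∀ i, Integrable (fun ω => ‖X i ω‖ ^ 2) μ := by
    intro i
    have h1 : Integrable (fun ω => ⟪C i ω (a i), a i⟫) μ := by
      have := (innerSL ℝ (a i)).integrable_comp (hint i x)
      exact this.congr (Filter.Eventually.of_forall fun ω => by
        simp only [innerSL_apply_apply]; exact real_inner_comm _ _)
    refine (((hint2 i x).sub (h1.const_mul 2)).add (integrable_const (‖a i‖ ^ 2))).congr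
      (Filter.Eventually.of_forall fun ω => ?_)
    simp only [hX, Pi.add_apply, Pi.sub_apply]
    rw [norm_sub_sq_real]
  have hXzero : ∀ i, ∫ ω, X i ω ∂μ = 0 := by
    intro i
    simp only [hX]
    rw [integral_sub (hint i x) (integrable_const _), hunb, integral_const]
    simp [ha]
  have hSzero : ∫ ω, S ω ∂μ = 0 := by
    rw [hS, integral_finset_sum _ fun i _ => hXint i]
    simp [hXzero]
  -- pairwise independence of centered variables
  have hindepX : ∀ i j, i ≠ j → IndepFun (X i) (X j) μ := by
    intro i j hij
    have h := ((hindep x).indepFun hij).comp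
      (measurable_id.sub (measurable_const (a := a i)))
      (measurable_id.sub (measurable_const (a := a j)))
    exact h
  have hinner_int : ∀ i j, Integrable (fun ω => ⟪X i ω, X j ω⟫) μ := by
    intro i j
    rcases eq_or_ne i j with rfl | hij
    · exact (hX2 i).congr (Filter.Eventually.of_forall fun ω =>
        (real_inner_self_eq_norm_sq _).symm)
    · exact (indep_integral_inner (hindepX i j hij) (hXint i) (hXint j)).1
  have hinner_zero : ∀ i j, i ≠ j → ∫ ω, ⟪X i ω, X j ω⟫ ∂μ = 0 := by
    intro i j hij
    rw [(indep_integral_inner (hindepX i j hij) (hXint i) (hXint j)).2, hXzero, hXzero,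
      inner_zero_left]
  have h1 : ∀ ω, ‖S ω‖ ^ 2 = ∑ i, ∑ j, ⟪X i ω, X j ω⟫ := by
    intro ω
    rw [← real_inner_self_eq_norm_sq, hS, sum_inner]
    exact Finset.sum_congr rfl fun i _ => inner_sum _ _ _
  have hSsq_int : Integrable (fun ω => ‖S ω‖ ^ 2) μ := by
    have : Integrable (fun ω => ∑ i, ∑ j, ⟪X i ω, X j ω⟫) μ :=
      integrable_finset_sum _ fun i _ => integrable_finset_sum _ fun j _ => hinner_int i j
    exact this.congr (Filter.Eventually.of_forall fun ω => (h1 ω).symm)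
  have hSsq : ∫ ω, ‖S ω‖ ^ 2 ∂μ = ∑ i, ∫ ω, ‖X i ω‖ ^ 2 ∂μ := by
    calc ∫ ω, ‖S ω‖ ^ 2 ∂μ = ∫ ω, ∑ i, ∑ j, ⟪X i ω, X j ω⟫ ∂μ := by simp_rw [h1]
      _ = ∑ i, ∑ j, ∫ ω, ⟪X i ω, X j ω⟫ ∂μ := by
          rw [integral_finset_sum _ fun i _ => integrable_finset_sum _ fun j _ => hinner_int i j]
          exact Finset.sum_congr rfl fun i _ =>
            integral_finset_sum _ fun j _ => hinner_int i j
      _ = ∑ i, ∫ ω, ‖X i ω‖ ^ 2 ∂μ := by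
          refine Finset.sum_congr rfl fun i _ => ?_
          rw [Finset.sum_eq_single i (fun j _ hj => hinner_zero i j (Ne.symm hj))
            (fun h => absurd (Finset.mem_univ i) h)]
          exact integral_congr_ae (Filter.Eventually.of_forall fun ω =>
            real_inner_self_eq_norm_sq _)
  have hmS_int : Integrable (fun ω => ⟪m, S ω⟫) μ := (innerSL ℝ m).integrable_comp hSint
  -- pointwise decomposition
  have hpt : ∀ ω, ‖c • ∑ i, C i ω (a i)‖ ^ 2 =
      c ^ 2 * ‖S ω‖ ^ 2 + 2 * c ^ 2 * ⟪m, S ω⟫ + c ^ 2 * ‖m‖ ^ 2 := by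
    intro ω
    have hsum : ∑ i, C i ω (a i) = S ω + m := by
      rw [hS, hm, ← Finset.sum_add_distrib]
      exact Finset.sum_congr rfl fun i _ => by simp [hX]
    rw [hsum, norm_smul, mul_pow, norm_add_sq_real, real_inner_comm]
    simp only [Real.norm_eq_abs, sq_abs]
    ring
  -- compute the integral
  have hint_eq : ∫ ω, ‖c • ∑ i, C i ω (a i)‖ ^ 2 ∂μ =
      c ^ 2 * (∑ i, ∫ ω, ‖X i ω‖ ^ 2 ∂μ) + c ^ 2 * ‖m‖ ^ 2 := by
    calc ∫ ω, ‖c • ∑ i, C i ω (a i)‖ ^ 2 ∂μ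
        = ∫ ω, (c ^ 2 * ‖S ω‖ ^ 2 + 2 * c ^ 2 * ⟪m, S ω⟫ + c ^ 2 * ‖m‖ ^ 2) ∂μ := by
          simp_rw [hpt]
      _ = c ^ 2 * (∫ ω, ‖S ω‖ ^ 2 ∂μ) + 2 * c ^ 2 * ⟪m, ∫ ω, S ω ∂μ⟫ + c ^ 2 * ‖m‖ ^ 2 := by
          have hA : Integrable (fun ω => c ^ 2 * ‖S ω‖ ^ 2) μ := hSsq_int.const_mul _
          have hB : Integrable (fun ω => 2 * c ^ 2 * ⟪m, S ω⟫) μ := hmS_int.const_mul _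
          have hAB : Integrable (fun ω => c ^ 2 * ‖S ω‖ ^ 2 + 2 * c ^ 2 * ⟪m, S ω⟫) μ :=
            hA.add hB
          rw [integral_add hAB (integrable_const _), integral_add hA hB,
            MeasureTheory.integral_const_mul, MeasureTheory.integral_const_mul, integral_inner hSint, integral_const]
          simp
      _ = c ^ 2 * (∑ i, ∫ ω, ‖X i ω‖ ^ 2 ∂μ) + c ^ 2 * ‖m‖ ^ 2 := by
          rw [hSzero, hSsq, inner_zero_right]
          ring
  -- now bound
  have hvar_bound : ∑ i, ∫ ω, ‖X i ω‖ ^ 2 ∂μ ≤ ω₀ * ∑ i, ‖a i‖ ^ 2 := by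
    rw [Finset.mul_sum]
    exact Finset.sum_le_sum fun i _ => hvar i (a i)
  have hcmF : c ^ 2 * ‖m‖ ^ 2 = ‖Fg‖ ^ 2 := by
    rw [hFgm, norm_smul, mul_pow]
    simp only [Real.norm_eq_abs, sq_abs]
  have hgr := hgrowth x
  have key : c ^ 2 * (ω₀ * ∑ i, ‖a i‖ ^ 2) ≤ D * ω₀ / n * ‖Fg‖ ^ 2 := by
    have h1 : c * ∑ i, ‖a i‖ ^ 2 ≤ D * ‖Fg‖ ^ 2 := hgr
    have h2 : c * ω₀ ≥ 0 := by positivity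
    calc c ^ 2 * (ω₀ * ∑ i, ‖a i‖ ^ 2) = (c * ω₀) * (c * ∑ i, ‖a i‖ ^ 2) := by ring
      _ ≤ (c * ω₀) * (D * ‖Fg‖ ^ 2) := by
          exact mul_le_mul_of_nonneg_left h1 h2
      _ = D * ω₀ / n * ‖Fg‖ ^ 2 := by
          rw [hc]
          field_simp
  calc ∫ ω, ‖c • ∑ i, C i ω (a i)‖ ^ 2 ∂μ
      = c ^ 2 * (∑ i, ∫ ω, ‖X i ω‖ ^ 2 ∂μ) + c ^ 2 * ‖m‖ ^ 2 := hint_eq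
    _ ≤ c ^ 2 * (ω₀ * ∑ i, ‖a i‖ ^ 2) + c ^ 2 * ‖m‖ ^ 2 := by
        have : (0:ℝ) ≤ c ^ 2 := by positivity
        nlinarith [hvar_bound]
    _ ≤ D * ω₀ / n * ‖Fg‖ ^ 2 + ‖Fg‖ ^ 2 := by rw [hcmF]; linarith [key]
    _ = (D * ω₀ / n + 1) * ‖Fg‖ ^ 2 := by ring
end
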